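/- Let M be a Markov chain with n = |S| states, targets T, and weight function w : T → [0,∞), in which every state can reach T along edges; let s ∉ T and γ ≥ 0. Let f : S → ℝ be any vector with f ≥ val_{M[s=γ]} pointwise, where val_{M[s=γ]} is the weighted reachability value vector of the reduced MC M[s = γ], and set γ' := ∑_{s'} δ(s,s') f(s'). Then for every ε > 0: if γ' − p_min^n · ε < γ, then val_M(s) < γ + ε, where val_M is the weighted reachability value vector of M. -/

import Mathlib

/-- A finite Markov chain: transition function `δ` (nonnegative, rows sum to 1)
together with a set `T` of absorbing target states. There is an edge `s → s'`
iff `δ s s' > 0`. -/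
structure MC (S : Type) [Fintype S] [DecidableEq S] where
  δ : S → S → ℝ
  T : Finset S
  nonneg : ∀ s s' : S, 0 ≤ δ s s'
  rowsum : ∀ s : S, ∑ s' : S, δ s s' = 1
  absorbing : ∀ t ∈ T, δ t t = 1

variable {S : Type} [Fintype S] [DecidableEq S]

/-- Edge relation of a Markov chain: `s → s'` iff `δ s s' > 0`. -/
def MC.edge (M : MC S) (a b : S) : Prop := 0 < M.δ a b

/-- `pathLen r n a b`: there is a path of length `n` from `a` to `b` along `r`. -/
def pathLen (r : S → S → Prop) : ℕ → S → S → Prop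
  | 0 => fun a b => a = b
  | n + 1 => fun a c => ∃ b, r a b ∧ pathLen r n b c

/-- `reaches r A s`: `s` can reach the set `A` along the relation `r`. -/
def reaches (r : S → S → Prop) (A : Set S) (s : S) : Prop :=
  ∃ n, ∃ a ∈ A, pathLen r n s a

/-- Length of a shortest path from `s` to the set `A` along `r`. -/
noncomputable def distTo (r : S → S → Prop) (A : Set S) (s : S) : ℕ :=
  sInf {n | ∃ a ∈ A, pathLen r n s a}

/-- Level `0`: the targets together with all states that cannot reach the targets. -/
def MC.level0 (M : MC S) : Set S :=
  {s | s ∈ M.T ∨ ¬ reaches M.edge (M.T : Set S) s}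

/-- The levels of a Markov chain: `ℓ_0` is `level0`, and for `i ≥ 1`, `ℓ_i` is the
set of states whose shortest edge-path distance to `ℓ_0` is exactly `i`. -/
noncomputable def MC.levelSet (M : MC S) : ℕ → Set S
  | 0 => M.level0
  | i + 1 => {s | distTo M.edge M.level0 s = i + 1}

/-- `M` has (exactly) `k` levels: `ℓ_k` is the last nonempty level. -/
def MC.hasLevels (M : MC S) (k : ℕ) : Prop :=
  (M.levelSet k).Nonempty ∧ ∀ i, k < i → M.levelSet i = ∅

/-- One-step transition matrix of the Markov chain. -/
noncomputable def MC.P (M : MC S) : Matrix S S ℝ := Matrix.of M.δ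

/-- Weighted reachability value `val(s) = E_s[w(X_{t*}) · 1{t* < ∞}]`, where `t*` is
the first hitting time of `T`. Since `T` is absorbing, this equals the supremum
(monotone limit) over `n` of `∑_{t ∈ T} (δⁿ)(s,t)·w(t)`. -/
noncomputable def MC.reachVal (M : MC S) (w : S → ℝ) (s : S) : ℝ :=
  ⨆ n : ℕ, ∑ t ∈ M.T, (M.P ^ n) s t * w t

/-- Stochastic shortest path value `val(s) = E_s[∑_{t=0}^{t*} w(X_t)]`, where `t*` is
the first hitting time of `T`: the expected weight collected strictly before `T`
(states outside `T`, counted via the `n`-step distributions) plus the expected weight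
of the first target state hit. -/
noncomputable def MC.sspVal (M : MC S) (w : S → ℝ) (s : S) : ℝ :=
  (∑' n : ℕ, ∑ s' ∈ Finset.univ.filter (fun x => x ∉ M.T), (M.P ^ n) s s' * w s')
    + M.reachVal w s

/-- Smallest positive transition probability of the Markov chain. -/
noncomputable def MC.pmin (M : MC S) : ℝ :=
  sInf {p : ℝ | 0 < p ∧ ∃ s s' : S, M.δ s s' = p}

/-- Reachability Bellman update. -/
noncomputable def MC.reachUpdate (M : MC S) (w : S → ℝ) (v : S → ℝ) : S → ℝ :=
  fun s => if s ∈ M.T then w s else ∑ s' : S, M.δ s s' * v s'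

/-- SSP Bellman update. -/
noncomputable def MC.sspUpdate (M : MC S) (w : S → ℝ) (v : S → ℝ) : S → ℝ :=
  fun s => if s ∈ M.T then w s else w s + ∑ s' : S, M.δ s s' * v s'

/-- The reduced Markov chain `M[s = ·]`: the state `s` is made absorbing (its row of
`δ` replaced by the point mass at `s`) and added to the target set. -/
def MC.reduce (M : MC S) (s : S) : MC S where
  δ := fun a b => if a = s then (if b = s then 1 else 0) else M.δ a b
  T := insert s M.T
  nonneg := by
    intro a b
    by_cases h : a = s
    · by_cases h' : b = s <;> simp [h, h']
    · simpa [h] using M.nonneg a b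
  rowsum := by
    intro a
    by_cases h : a = s
    · simp [h]
    · simpa [h] using M.rowsum a
  absorbing := by
    intro t ht
    rcases Finset.mem_insert.mp ht with h | h
    · simp [h]
    · by_cases h' : t = s
      · simp [h']
      · simpa [h'] using M.absorbing t h

/-- Probability, in `M`, of ever visiting the state `s` when starting from `a`,
i.e. `P_a(∃ t ≥ 0, X_t = s)` (computed as a reachability value after making `s`
absorbing, which does not change the dynamics before the first visit to `s`). -/
noncomputable def MC.hitProb (M : MC S) (a s : S) : ℝ :=
  (M.reduce s).reachVal (fun b => if b = s then 1 else 0) a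

/-- Probability of having reached `T` within `i` steps, `P_s(∃ t ≤ i, X_t ∈ T)`;
since `T` is absorbing this equals `∑_{t ∈ T} (δ^i)(s,t)`. -/
noncomputable def MC.hitBy (M : MC S) (s : S) (i : ℕ) : ℝ :=
  ∑ t ∈ M.T, (M.P ^ i) s t
/-! `val_M` is the least nonnegative superharmonic majorant of `w` on `T`, so it suffices to
exhibit one whose value at `s` is below `γ + ε`. Let `g` be the value vector of `M[s = γ]` and
`q(a)` the probability of visiting `s` from `a`. Away from `s` both are harmonic for `M`, so
`u := g + d·q` is superharmonic for `M` as soon as `∑ δ(s,·) u ≤ u(s) = γ + d`. A shortest path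
from `s` to `T` has fewer than `n` edges and does not return to `s`, so leaving `s` the chain
escapes to `T` before returning with probability at least `pmin^n`: `∑ δ(s,·) q ≤ 1 - pmin^n`.
With `γ' - γ < pmin^n·ε` this makes `u` superharmonic for some `d < ε`. -/

open Filter Topology Matrix

section Paths

variable {α : Type} {r : α → α → Prop}

lemma exists_fun_of_pathLen : ∀ {m : ℕ} {a b : α}, pathLen r m a b →
    ∃ ν : ℕ → α, ν 0 = a ∧ ν m = b ∧ ∀ i < m, r (ν i) (ν (i + 1))
  | 0, a, _, hab => ⟨fun _ => a, rfl, hab, fun i hi => absurd hi (Nat.not_lt_zero i)⟩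
  | _ + 1, a, _, ⟨_, hab, hbc⟩ => by
    obtain ⟨ν, rfl, hνm, hν⟩ := exists_fun_of_pathLen hbc
    refine ⟨fun | 0 => a | i + 1 => ν i, rfl, hνm, ?_⟩
    rintro (_ | i) hi
    · exact hab
    · exact hν i (by omega)

lemma exists_path_shortcut {m : ℕ} {ν : ℕ → α} (hν : ∀ k < m, r (ν k) (ν (k + 1)))
    {i j : ℕ} (hij : i < j) (hjm : j ≤ m) (heq : ν i = ν j) :
    ∃ ν' : ℕ → α, ν' 0 = ν 0 ∧ ν' (m - (j - i)) = ν m ∧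
      ∀ k < m - (j - i), r (ν' k) (ν' (k + 1)) := by
  refine ⟨fun k => if k ≤ i then ν k else ν (k + (j - i)), if_pos (Nat.zero_le i), ?_, ?_⟩
  · by_cases hj : j = m
    · subst hj
      simp only [show j - (j - i) = i by omega, le_refl, if_true, heq]
    · simp only [if_neg (show ¬ m - (j - i) ≤ i by omega),
        show m - (j - i) + (j - i) = m by omega]
  · intro k hk
    by_cases hki : k < i
    · simpa only [if_pos hki.le, if_pos (show k + 1 ≤ i by omega)] using hν k (by omega)
    · by_cases hk' : k = i
      · subst hk'
        simpa only [le_refl, if_true, if_neg (show ¬ k + 1 ≤ k by omega), heq,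
          show k + 1 + (j - k) = j + 1 by omega] using hν j (by omega)
      · simpa only [if_neg (show ¬ k ≤ i by omega), if_neg (show ¬ k + 1 ≤ i by omega),
          show k + 1 + (j - i) = k + (j - i) + 1 by omega] using hν (k + (j - i)) (by omega)

lemma exists_injOn_path {A : Set α} {a : α} (h : reaches r A a) :
    ∃ m, ∃ ν : ℕ → α, ν 0 = a ∧ ν m ∈ A ∧ (∀ i < m, r (ν i) (ν (i + 1))) ∧
      Set.InjOn ν (Set.Iic m) := by
  classical
  have hex : ∃ m, ∃ ν : ℕ → α, ν 0 = a ∧ ν m ∈ A ∧ ∀ i < m, r (ν i) (ν (i + 1)) := by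
    obtain ⟨m, t, ht, hp⟩ := h
    obtain ⟨ν, h0, hm, hν⟩ := exists_fun_of_pathLen hp
    exact ⟨m, ν, h0, hm ▸ ht, hν⟩
  obtain ⟨ν, h0, hm, hν⟩ := Nat.find_spec hex
  have hne : ∀ i j, i < j → j ≤ Nat.find hex → ν i ≠ ν j := fun i j hij hj heq => by
    obtain ⟨ν', h0', hm', hν'⟩ := exists_path_shortcut hν hij hj heq
    exact Nat.find_min hex (show Nat.find hex - (j - i) < Nat.find hex by omega)
      ⟨ν', h0'.trans h0, hm' ▸ hm, hν'⟩
  refine ⟨_, ν, h0, hm, hν, fun i hi j hj hij => ?_⟩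
  rcases lt_trichotomy i j with hlt | heq | hgt
  · exact absurd hij (hne i j hlt hj)
  · exact heq
  · exact absurd hij.symm (hne j i hgt hi)

end Paths

namespace MC

variable (M : MC S)

lemma P_mem_rowStochastic : M.P ∈ rowStochastic ℝ S :=
  mem_rowStochastic_iff_sum.2 ⟨M.nonneg, M.rowsum⟩

lemma P_pow_nonneg (n : ℕ) (a b : S) : 0 ≤ (M.P ^ n) a b :=
  nonneg_of_mem_rowStochastic (pow_mem M.P_mem_rowStochastic n)

lemma P_pow_le_one (n : ℕ) (a b : S) : (M.P ^ n) a b ≤ 1 :=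
  le_one_of_mem_rowStochastic (pow_mem M.P_mem_rowStochastic n)

lemma δ_le_one (a b : S) : M.δ a b ≤ 1 :=
  le_one_of_mem_rowStochastic M.P_mem_rowStochastic

lemma δ_eq_zero_of_mem_T {t : S} (ht : t ∈ M.T) {b : S} (hb : b ≠ t) : M.δ t b = 0 := by
  have hpair : ∑ c ∈ {b, t}, M.δ t c ≤ ∑ c, M.δ t c :=
    Finset.sum_le_sum_of_subset_of_nonneg (Finset.subset_univ _) fun c _ _ => M.nonneg t c
  rw [Finset.sum_pair hb, M.absorbing t ht, M.rowsum t] at hpair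
  linarith [M.nonneg t b]

lemma sum_δ_mul_of_mem_T {t : S} (ht : t ∈ M.T) (v : S → ℝ) : ∑ b, M.δ t b * v b = v t := by
  rw [Finset.sum_eq_single t (fun b _ hb => by rw [M.δ_eq_zero_of_mem_T ht hb, zero_mul])
    (by simp), M.absorbing t ht, one_mul]

lemma reduce_δ_of_ne {s a : S} (ha : a ≠ s) (b : S) : (M.reduce s).δ a b = M.δ a b := by
  simp [MC.reduce, ha]

lemma pow_le_P_pow_of_path {c : ℝ} (hc : 0 ≤ c) : ∀ (m : ℕ) (ν : ℕ → S),
    (∀ i < m, c ≤ M.δ (ν i) (ν (i + 1))) → c ^ m ≤ (M.P ^ m) (ν 0) (ν m)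
  | 0, ν, _ => by simp
  | m + 1, ν, hν => by
    have ih := pow_le_P_pow_of_path hc m (fun i => ν (i + 1)) fun i hi => hν (i + 1) (by omega)
    calc c ^ (m + 1) = c * c ^ m := pow_succ' c m
      _ ≤ M.δ (ν 0) (ν 1) * (M.P ^ m) (ν 1) (ν (m + 1)) :=
        mul_le_mul (hν 0 (by omega)) ih (pow_nonneg hc m) (hc.trans (hν 0 (by omega)))
      _ ≤ (M.P ^ (m + 1)) (ν 0) (ν (m + 1)) := by
        rw [pow_succ', Matrix.mul_apply]
        exact Finset.single_le_sum (f := fun b => M.P (ν 0) b * (M.P ^ m) b (ν (m + 1)))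
          (fun b _ => mul_nonneg (M.nonneg _ b) (M.P_pow_nonneg m b _)) (Finset.mem_univ (ν 1))

lemma finite_setOf_pos_δ : {p : ℝ | 0 < p ∧ ∃ a b : S, M.δ a b = p}.Finite :=
  (Set.finite_range fun q : S × S => M.δ q.1 q.2).subset fun _ ⟨_, a, b, hab⟩ => ⟨(a, b), hab⟩

lemma pmin_le {a b : S} (hab : 0 < M.δ a b) : M.pmin ≤ M.δ a b :=
  csInf_le M.finite_setOf_pos_δ.bddBelow ⟨hab, a, b, rfl⟩

lemma exists_pos_δ (a : S) : ∃ b, 0 < M.δ a b := by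
  by_contra! h
  have hrow := M.rowsum a
  rw [Finset.sum_eq_zero fun b _ => le_antisymm (h b) (M.nonneg a b)] at hrow
  exact zero_ne_one hrow

lemma pmin_pos [Nonempty S] : 0 < M.pmin := by
  obtain ⟨a⟩ := ‹Nonempty S›
  obtain ⟨b, hb⟩ := M.exists_pos_δ a
  have hne : {p : ℝ | 0 < p ∧ ∃ a b : S, M.δ a b = p}.Nonempty := ⟨_, hb, a, b, rfl⟩
  exact (hne.csInf_mem M.finite_setOf_pos_δ).1

lemma pmin_le_one [Nonempty S] : M.pmin ≤ 1 := by
  obtain ⟨a⟩ := ‹Nonempty S›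
  obtain ⟨b, hb⟩ := M.exists_pos_δ a
  exact (M.pmin_le hb).trans (M.δ_le_one a b)

noncomputable def reachApprox (w : S → ℝ) (n : ℕ) (a : S) : ℝ :=
  ∑ t ∈ M.T, (M.P ^ n) a t * w t

variable {M}
variable {w : S → ℝ}

lemma reachApprox_zero (a : S) : M.reachApprox w 0 a = if a ∈ M.T then w a else 0 := by
  simp [reachApprox, Matrix.one_apply]

lemma reachApprox_succ (n : ℕ) (a : S) :
    M.reachApprox w (n + 1) a = ∑ b, M.δ a b * M.reachApprox w n b := by
  simp only [reachApprox, pow_succ', Matrix.mul_apply, Finset.sum_mul, Finset.mul_sum]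
  rw [Finset.sum_comm]
  simp only [MC.P, Matrix.of_apply, mul_assoc]

lemma reachApprox_of_mem_T {t : S} (ht : t ∈ M.T) (n : ℕ) : M.reachApprox w n t = w t := by
  induction n with
  | zero => rw [reachApprox_zero, if_pos ht]
  | succ n ih => rw [reachApprox_succ, M.sum_δ_mul_of_mem_T ht, ih]

lemma reachApprox_nonneg (hw : ∀ t ∈ M.T, 0 ≤ w t) (n : ℕ) (a : S) :
    0 ≤ M.reachApprox w n a :=
  Finset.sum_nonneg fun t ht => mul_nonneg (M.P_pow_nonneg n a t) (hw t ht)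

lemma monotone_reachApprox (hw : ∀ t ∈ M.T, 0 ≤ w t) (a : S) :
    Monotone fun n => M.reachApprox w n a := by
  refine monotone_nat_of_le_succ fun n => Finset.sum_le_sum fun t ht =>
    mul_le_mul_of_nonneg_right ?_ (hw t ht)
  rw [pow_succ, Matrix.mul_apply]
  calc (M.P ^ n) a t = (M.P ^ n) a t * M.P t t := by
        rw [MC.P, Matrix.of_apply, M.absorbing t ht, mul_one]
    _ ≤ ∑ c, (M.P ^ n) a c * M.P c t :=
      Finset.single_le_sum (f := fun c => (M.P ^ n) a c * M.P c t)
        (fun c _ => mul_nonneg (M.P_pow_nonneg n a c) (M.nonneg c t)) (Finset.mem_univ t)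

lemma bddAbove_reachApprox (hw : ∀ t ∈ M.T, 0 ≤ w t) (a : S) :
    BddAbove (Set.range fun n => M.reachApprox w n a) :=
  ⟨∑ t ∈ M.T, w t, Set.forall_mem_range.2 fun n => Finset.sum_le_sum fun t ht =>
    mul_le_of_le_one_left (hw t ht) (M.P_pow_le_one n a t)⟩

lemma tendsto_reachApprox (hw : ∀ t ∈ M.T, 0 ≤ w t) (a : S) :
    Tendsto (fun n => M.reachApprox w n a) atTop (𝓝 (M.reachVal w a)) :=
  tendsto_atTop_ciSup (monotone_reachApprox hw a) (bddAbove_reachApprox hw a)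

lemma reachApprox_le_reachVal (hw : ∀ t ∈ M.T, 0 ≤ w t) (n : ℕ) (a : S) :
    M.reachApprox w n a ≤ M.reachVal w a :=
  le_ciSup (bddAbove_reachApprox hw a) n

lemma reachVal_nonneg (hw : ∀ t ∈ M.T, 0 ≤ w t) (a : S) : 0 ≤ M.reachVal w a :=
  (reachApprox_nonneg hw 0 a).trans (reachApprox_le_reachVal hw 0 a)

lemma P_pow_mul_le_reachVal (hw : ∀ t ∈ M.T, 0 ≤ w t) (n : ℕ) (a : S) {t : S}
    (ht : t ∈ M.T) :
    (M.P ^ n) a t * w t ≤ M.reachVal w a :=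
  (Finset.single_le_sum (f := fun t => (M.P ^ n) a t * w t)
    (fun t ht => mul_nonneg (M.P_pow_nonneg n a t) (hw t ht)) ht).trans
    (reachApprox_le_reachVal hw n a)

lemma reachVal_eq_sum (hw : ∀ t ∈ M.T, 0 ≤ w t) (a : S) :
    M.reachVal w a = ∑ b, M.δ a b * M.reachVal w b := by
  refine tendsto_nhds_unique ((tendsto_reachApprox hw a).comp (tendsto_add_atTop_nat 1)) ?_
  simp only [Function.comp_def, reachApprox_succ]
  exact tendsto_finsetSum _ fun b _ => (tendsto_reachApprox hw b).const_mul _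

lemma reachVal_add (hw : ∀ t ∈ M.T, 0 ≤ w t) {w' : S → ℝ} (hw' : ∀ t ∈ M.T, 0 ≤ w' t)
    (a : S) :
    M.reachVal (w + w') a = M.reachVal w a + M.reachVal w' a := by
  refine tendsto_nhds_unique ?_ ((tendsto_reachApprox hw a).add (tendsto_reachApprox hw' a))
  refine tendsto_reachApprox (fun t ht => add_nonneg (hw t ht) (hw' t ht)) a |>.congr fun n => ?_
  simp only [reachApprox, mul_add, Finset.sum_add_distrib]

lemma reachVal_of_mem_T {t : S} (ht : t ∈ M.T) : M.reachVal w t = w t := by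
  simp [reachVal, ← reachApprox.eq_def, reachApprox_of_mem_T ht]

lemma reachVal_le_of_superharmonic {u : S → ℝ} (hu0 : ∀ b, 0 ≤ u b)
    (huT : ∀ t ∈ M.T, w t ≤ u t) (hu : ∀ a ∉ M.T, ∑ b, M.δ a b * u b ≤ u a) (a : S) :
    M.reachVal w a ≤ u a := by
  have hstep : ∀ a, ∑ b, M.δ a b * u b ≤ u a := fun a => by
    by_cases ha : a ∈ M.T
    · exact (M.sum_δ_mul_of_mem_T ha u).le
    · exact hu a ha
  have happrox : ∀ n a, M.reachApprox w n a ≤ u a := by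
    intro n
    induction n with
    | zero =>
      intro a
      rw [reachApprox_zero]
      split_ifs with ha
      exacts [huT a ha, hu0 a]
    | succ n ih =>
      intro a
      rw [reachApprox_succ]
      exact (Finset.sum_le_sum fun b _ => mul_le_mul_of_nonneg_left (ih b) (M.nonneg a b)).trans
        (hstep a)
  exact ciSup_le fun n => happrox n a

lemma reachVal_le_one (hw1 : ∀ t ∈ M.T, w t ≤ 1) (a : S) : M.reachVal w a ≤ 1 :=
  reachVal_le_of_superharmonic (u := fun _ => 1) (fun _ => zero_le_one) hw1
    (fun a _ => by simp [M.rowsum a]) a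

variable (M)

lemma sum_δ_mul_reachVal_reduce {s a : S} (ha : a ≠ s) {w : S → ℝ}
    (hw : ∀ t ∈ (M.reduce s).T, 0 ≤ w t) :
    ∑ b, M.δ a b * (M.reduce s).reachVal w b = (M.reduce s).reachVal w a := by
  simp only [reachVal_eq_sum hw a, M.reduce_δ_of_ne ha]

lemma exists_pmin_pow_le_P_pow_reduce {s : S} (hreach : reaches M.edge (M.T : Set S) s)
    (hs : s ∉ M.T) : ∃ m, m < Fintype.card S ∧ ∃ b, M.pmin ≤ M.δ s b ∧
      ∃ t ∈ M.T, M.pmin ^ m ≤ ((M.reduce s).P ^ m) b t := by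
  have : Nonempty S := ⟨s⟩
  obtain ⟨m, ν, hν0, hνm, hedge, hinj⟩ := exists_injOn_path hreach
  have hm : m ≠ 0 := fun h0 => hs (by rwa [h0, hν0] at hνm)
  have hcard : m + 1 ≤ Fintype.card S := by
    simpa using Finset.card_le_card_of_injOn ν (fun _ _ => Finset.mem_univ _)
      (hinj.mono fun i hi => Nat.lt_succ_iff.1 (Finset.mem_range.1 hi))
  have hν_ne : ∀ i, 1 ≤ i → i ≤ m → ν i ≠ s := fun i hi him heq =>
    absurd (hinj him (Nat.zero_le m) (heq.trans hν0.symm)) (by omega)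
  refine ⟨m - 1, by omega, ν 1, M.pmin_le (hν0 ▸ hedge 0 (by omega)), ν m, hνm, ?_⟩
  have hP := (M.reduce s).pow_le_P_pow_of_path M.pmin_pos.le (m - 1) (fun i => ν (i + 1))
    fun i _ => by
      rw [M.reduce_δ_of_ne (hν_ne (i + 1) (by omega) (by omega))]
      exact M.pmin_le (hedge (i + 1) (by omega))
  simpa [show m - 1 + 1 = m by omega] using hP

lemma sum_δ_mul_hitProb_le {s : S} (hreach : reaches M.edge (M.T : Set S) s) (hs : s ∉ M.T) :
    ∑ b, M.δ s b * M.hitProb b s ≤ 1 - M.pmin ^ Fintype.card S := by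
  have : Nonempty S := ⟨s⟩
  obtain ⟨m, hm, b₀, hδ, t, ht, hP⟩ := M.exists_pmin_pow_le_P_pow_reduce hreach hs
  set indT : S → ℝ := fun b => if b ∈ M.T then 1 else 0
  -- `escape b`: the probability of reaching `T` from `b` before visiting `s`
  set escape := (M.reduce s).reachVal indT
  have hq0 : ∀ t ∈ (M.reduce s).T, (0 : ℝ) ≤ if t = s then 1 else 0 := fun _ _ => by positivity
  have hT0 : ∀ t ∈ (M.reduce s).T, 0 ≤ indT t := fun _ _ => by positivity
  have hescape : M.pmin ^ m ≤ escape b₀ := by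
    calc M.pmin ^ m ≤ ((M.reduce s).P ^ m) b₀ t * indT t := by simpa [indT, ht] using hP
      _ ≤ escape b₀ := P_pow_mul_le_reachVal hT0 m b₀ (Finset.mem_insert_of_mem ht)
  have hsum : ∀ b, M.hitProb b s + escape b ≤ 1 := fun b => by
    rw [hitProb, ← reachVal_add hq0 hT0]
    refine reachVal_le_one (fun t _ => ?_) b
    by_cases hts : t = s
    · simp [indT, hts, hs]
    · simp only [Pi.add_apply, indT, if_neg hts, zero_add]
      split_ifs <;> norm_num
  calc ∑ b, M.δ s b * M.hitProb b s ≤ ∑ b, M.δ s b * (1 - escape b) :=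
        Finset.sum_le_sum fun b _ =>
          mul_le_mul_of_nonneg_left (by linarith [hsum b]) (M.nonneg s b)
    _ = 1 - ∑ b, M.δ s b * escape b := by simp [mul_sub, Finset.sum_sub_distrib, M.rowsum s]
    _ ≤ 1 - M.δ s b₀ * escape b₀ :=
        sub_le_sub_left (Finset.single_le_sum (f := fun b => M.δ s b * escape b)
          (fun b _ => mul_nonneg (M.nonneg s b) (reachVal_nonneg hT0 b))
          (Finset.mem_univ _)) 1
    _ ≤ 1 - M.pmin * M.pmin ^ m :=
        sub_le_sub_left (mul_le_mul hδ hescape (pow_nonneg M.pmin_pos.le _) (M.nonneg s _)) 1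
    _ = 1 - M.pmin ^ (m + 1) := by rw [pow_succ']
    _ ≤ 1 - M.pmin ^ Fintype.card S :=
        sub_le_sub_left (pow_le_pow_of_le_one M.pmin_pos.le M.pmin_le_one hm) 1

lemma reachVal_le_of_reduce (hw : ∀ t ∈ M.T, 0 ≤ w t) {s : S} (hs : s ∉ M.T) {γ d : ℝ}
    (hγ : 0 ≤ γ) (hd : 0 ≤ d)
    (hsuper : ∑ b, M.δ s b * (M.reduce s).reachVal (Function.update w s γ) b
      + d * ∑ b, M.δ s b * M.hitProb b s ≤ γ + d) :
    M.reachVal w s ≤ γ + d := by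
  set g := (M.reduce s).reachVal (Function.update w s γ)
  have hsT : s ∈ (M.reduce s).T := Finset.mem_insert_self s M.T
  have hne : ∀ {t}, t ∈ M.T → t ≠ s := fun ht hts => hs (hts ▸ ht)
  have hg0 : ∀ t ∈ (M.reduce s).T, 0 ≤ Function.update w s γ t := fun t ht => by
    rcases Finset.mem_insert.1 ht with rfl | ht
    · simpa using hγ
    · simpa [hne ht] using hw t ht
  have hq0 : ∀ t ∈ (M.reduce s).T, (0 : ℝ) ≤ if t = s then 1 else 0 := fun _ _ => by positivity
  have hsplit : ∀ a, ∑ b, M.δ a b * (g b + d * M.hitProb b s)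
      = ∑ b, M.δ a b * g b + d * ∑ b, M.δ a b * M.hitProb b s := fun a => by
    simp only [mul_add, Finset.sum_add_distrib, Finset.mul_sum, mul_left_comm _ d]
  have hus : g s + d * M.hitProb s s = γ + d := by
    simp [g, hitProb, reachVal_of_mem_T hsT]
  calc M.reachVal w s ≤ g s + d * M.hitProb s s :=
        reachVal_le_of_superharmonic (u := fun b => g b + d * M.hitProb b s) ?_ ?_ ?_ s
    _ = γ + d := hus
  · exact fun b => add_nonneg (reachVal_nonneg hg0 b) (mul_nonneg hd (reachVal_nonneg hq0 b))
  · intro t ht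
    have htT : t ∈ (M.reduce s).T := Finset.mem_insert_of_mem ht
    simp [g, hitProb, reachVal_of_mem_T htT, hne ht]
  · intro a _
    rw [hsplit]
    by_cases has : a = s
    · subst has
      rwa [hus]
    · simp only [g, hitProb, M.sum_δ_mul_reachVal_reduce has hg0,
        M.sum_δ_mul_reachVal_reduce has hq0, le_refl]

end MC

theorem stmt_7_general {S : Type} [Fintype S] [DecidableEq S]
    (M : MC S) (hreach : ∀ a : S, reaches M.edge (M.T : Set S) a)
    (w : S → ℝ) (hw : ∀ t ∈ M.T, 0 ≤ w t)
    (s : S) (hs : s ∉ M.T) (γ : ℝ) (hγ : 0 ≤ γ)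
    (f : S → ℝ)
    (hf : ∀ a : S, (M.reduce s).reachVal (Function.update w s γ) a ≤ f a)
    (ε : ℝ) (hε : 0 < ε)
    (h : (∑ s' : S, M.δ s s' * f s') - M.pmin ^ (Fintype.card S) * ε < γ) :
    M.reachVal w s < γ + ε := by
  have : Nonempty S := ⟨s⟩
  set c := M.pmin ^ Fintype.card S
  set γ' := ∑ b, M.δ s b * f b
  have hc : 0 < c := pow_pos M.pmin_pos _
  have hQ := M.sum_δ_mul_hitProb_le (hreach s) hs
  have hg : ∑ b, M.δ s b * (M.reduce s).reachVal (Function.update w s γ) b ≤ γ' :=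
    Finset.sum_le_sum fun b _ => mul_le_mul_of_nonneg_left (hf b) (M.nonneg s b)
  obtain ⟨d, hd, hdε⟩ := exists_between
    (max_lt ((div_lt_iff₀ hc).2 (by linarith)) hε : max ((γ' - γ) / c) 0 < ε)
  have hdc : γ' - γ < d * c := (div_lt_iff₀ hc).1 ((le_max_left _ _).trans_lt hd)
  have hd0 : 0 ≤ d := (le_max_right _ _).trans hd.le
  have hval := M.reachVal_le_of_reduce hw hs hγ hd0
    (by linarith [mul_le_mul_of_nonneg_left hQ hd0])
  linarith

/-- Approximate verification of a guess (upper bound): with `n = |S|`,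
if `f` is a pointwise upper bound on the value vector of the reduced Markov chain
`M[s = γ]`, `γ' = ∑_{s'} δ(s,s')·f(s')`, `ε > 0`, and `γ' - p_min^n·ε < γ`, then
`val_M(s) < γ + ε`. -/
theorem stmt_7 {S : Type} [Fintype S] [DecidableEq S] [Nonempty S]
    (M : MC S) (hreach : ∀ a : S, reaches M.edge (M.T : Set S) a)
    (w : S → ℝ) (hw : ∀ t ∈ M.T, 0 ≤ w t)
    (s : S) (hs : s ∉ M.T) (γ : ℝ) (hγ : 0 ≤ γ)
    (f : S → ℝ)
    (hf : ∀ a : S, (M.reduce s).reachVal (Function.update w s γ) a ≤ f a)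
    (ε : ℝ) (hε : 0 < ε)
    (h : (∑ s' : S, M.δ s s' * f s') - M.pmin ^ (Fintype.card S) * ε < γ) :
    M.reachVal w s < γ + ε :=
  stmt_7_general M hreach w hw s hs γ hγ f hf ε hε h
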